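/- arXiv:2209.14357 — 2 statements merged into one kernel-verified Lean document; each statement's English description precedes it below -/
import Mathlib

section
/- Let B be a locally compact abelian topological group which has a compact open subgroup K such that the quotient group B/K is finitely generated. Then every continuous group homomorphism χ : B → μ_∞ (the group of all complex roots of unity, with the discrete topology) has finite order. -/
/-!
`χ(K)` is a compact subset of a discrete space, hence finite. Together with the images of lifts of
finitely many generators of `B ⧸ K` it generates `χ(B)`, so `χ(B)` is a finitely generated torsion
abelian group, hence finite, and its exponent kills `χ`.
-/

theorem Subgroup.closure_union_out_eq_top {G : Type*} [Group G] (N : Subgroup G) [N.Normal]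
    {S : Set (G ⧸ N)} (hS : closure S = ⊤) :
    closure ((N : Set G) ∪ Quotient.out '' S) = ⊤ := by
  set H := closure ((N : Set G) ∪ Quotient.out '' S)
  have hNH : N ≤ H := fun x hx => subset_closure (Or.inl hx)
  have hmap : H.map (QuotientGroup.mk' N) = ⊤ := by
    rw [eq_top_iff, ← hS, closure_le]
    exact fun x hx => ⟨x.out, subset_closure (Or.inr ⟨x, hx, rfl⟩), x.out_eq⟩
  rw [← sup_eq_right.2 hNH, ← QuotientGroup.comap_map_mk', hmap, comap_top]

theorem MonoidHom.exists_pow_eq_one_of_closure_eq_top {G H : Type*} [Group G] [CommGroup H]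
    (f : G →* H) {s : Set G} (hs : Subgroup.closure s = ⊤) (hfin : (f '' s).Finite)
    (htors : ∀ g, IsOfFinOrder (f g)) : ∃ n, 0 < n ∧ ∀ g, f g ^ n = 1 := by
  have : Finite (f '' s) := hfin
  have : Group.FG f.range := by
    rw [f.range_eq_map, ← hs, f.map_closure]
    exact Group.closure_finite_fg _
  have : Finite f.range :=
    CommGroup.finite_of_fg_isMulTorsion _ fun ⟨_, g, rfl⟩ => Submonoid.isOfFinOrder_coe.1 (htors g)
  exact ⟨Monoid.exponent f.range, Nat.pos_of_ne_zero Monoid.exponent_ne_zero_of_finite,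
    fun g => congrArg Subtype.val (Monoid.pow_exponent_eq_one (⟨f g, g, rfl⟩ : f.range))⟩

theorem stmt1_general {B : Type*} [CommGroup B] [tB : TopologicalSpace B]
    (K : Subgroup B) (hKc : IsCompact (K : Set B))
    (hfg : Group.FG (B ⧸ K))
    (χ : B →* ℂˣ) (hvals : ∀ b, IsOfFinOrder (χ b))
    (hχ : @Continuous B ℂˣ tB ⊥ χ) :
    ∃ n : ℕ, 0 < n ∧ ∀ b, χ b ^ n = 1 := by
  let _ : TopologicalSpace ℂˣ := ⊥
  have : DiscreteTopology ℂˣ := ⟨rfl⟩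
  obtain ⟨S, hS⟩ := hfg
  refine χ.exists_pow_eq_one_of_closure_eq_top (Subgroup.closure_union_out_eq_top K hS) ?_ hvals
  rw [Set.image_union]
  exact (hKc.image hχ).finite_of_discrete.union ((S.finite_toSet.image _).image χ)

/-- If `B` is a locally compact abelian topological group possessing a compact open subgroup `K`
with `B ⧸ K` finitely generated, then every continuous homomorphism from `B` to the group of
roots of unity `μ∞ ⊂ ℂˣ` (with the discrete topology) has finite order.  Taking values in `μ∞`
is expressed by `∀ b, IsOfFinOrder (χ b)`, and continuity for the discrete topology on the
target by `@Continuous B ℂˣ tB ⊥ χ`. -/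
theorem stmt1 {B : Type*} [CommGroup B] [tB : TopologicalSpace B] [IsTopologicalGroup B]
    [LocallyCompactSpace B] (K : Subgroup B) (hKc : IsCompact (K : Set B))
    (hKo : IsOpen (K : Set B)) (hfg : Group.FG (B ⧸ K))
    (χ : B →* ℂˣ) (hvals : ∀ b, IsOfFinOrder (χ b))
    (hχ : @Continuous B ℂˣ tB ⊥ χ) :
    ∃ n : ℕ, 0 < n ∧ ∀ b, χ b ^ n = 1 :=
  stmt1_general (tB := tB) K hKc hfg χ hvals hχ
end

section
/- Let Γ be a group acting on a complex torus T̂ = Hom_ℤ(X, ℂ×) (X finitely generated free) through a finite quotient, and suppose c ∈ C¹(Γ, T̂) is a 1-cochain with c² ∈ B¹(Γ, T̂) (the square of c is a coboundary) and such that the differential ∂c is a 2-cocycle of finite order. If b ∈ T̂ satisfies that the coboundary σ ↦ b⁻¹σ(b) has finite order in C¹(Γ, T̂), i.e. there is n with b^{-n}σ(b^n) = 1 for all σ, and if b^n lies in the identity component of the Γ-fixed points T̂^{Γ,0}, then there exists t ∈ T̂^{Γ,0} with tⁿ = bⁿ, and b' = t⁻¹b is a torsion element of T̂ with b'⁻¹σ(b')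 = b⁻¹σ(b) for all σ. Consequently every coboundary in B¹(Γ, T̂) ∩ C¹(Γ, T̂[∞]) is the coboundary of a torsion element. -/
/-!
The fixed-point group `S` of an algebraic action of `Γ` on `T̂ = (ℂˣ)ʳ` through a finite quotient is
cut out by finitely many characters `x ↦ ∏ xⱼ ^ μⱼ`. Its identity component is the image under
`exp` of the subspace `{v | ∑ μⱼ vⱼ = 0}`, hence divisible, and `S / S⁰` is torsion because the
integral equations satisfied by `log x` modulo `2πiℤ` have rational solutions. If `bⁿ ∈ S⁰` and
`t ∈ S⁰` is an `n`-th root of `bⁿ`, then `t` is fixed, so `t⁻¹ b` has the coboundary of `b` and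
`(t⁻¹ b)ⁿ = 1`. A coboundary `σ ↦ b⁻¹ σ(b)` with torsion values has a common exponent `N` (it
takes finitely many values), so `b ^ N ∈ S`, some power of it lies in `S⁰`, and the first case
applies.
-/

open Complex Filter Topology

theorem exists_pow_eq_one_of_finite_range {α M : Type*} [Monoid M] {f : α → M}
    (hf : (Set.range f).Finite) (h : ∀ a, IsOfFinOrder (f a)) : ∃ N ≠ 0, ∀ a, f a ^ N = 1 := by
  refine ⟨∏ y ∈ hf.toFinset, orderOf y, Finset.prod_ne_zero_iff.2 fun y hy => ?_, fun a => ?_⟩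
  · obtain ⟨a, rfl⟩ := hf.mem_toFinset.1 hy
    exact (h a).orderOf_pos.ne'
  · exact orderOf_dvd_iff_pow_eq_one.1 (Finset.dvd_prod_of_mem _ (hf.mem_toFinset.2 ⟨a, rfl⟩))

theorem Subgroup.connectedComponentIn_one_subset {G : Type*} [Group G] [TopologicalSpace G]
    [IsTopologicalGroup G] {S H : Subgroup G} (hH : (H : Set G) ∈ 𝓝[S] 1) :
    connectedComponentIn (S : Set G) 1 ⊆ H := by
  let H' : Subgroup S := H.subgroupOf S
  have hH' : IsOpen (H' : Set S) := by
    refine H'.isOpen_of_mem_nhds (g := 1) (mem_nhds_subtype_iff_nhdsWithin.2 ?_)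
    refine mem_of_superset (inter_mem hH self_mem_nhdsWithin) ?_
    rintro x ⟨hxH, hxS⟩
    exact ⟨⟨x, hxS⟩, hxH, rfl⟩
  rw [connectedComponentIn_eq_image S.one_mem]
  rintro _ ⟨x, hx, rfl⟩
  exact IsClopen.connectedComponent_subset ⟨H'.isClosed_of_isOpen hH', hH'⟩ H'.one_mem hx

section Coboundary

variable {Γ G F : Type*} [FunLike F G G] (ρ : Γ → F)

theorem inv_mul_coboundary_eq [Group G] [MonoidHomClass F G G] {t : G} (ht : ∀ σ, ρ σ t = t)
    (b : G) (σ : Γ) : (t⁻¹ * b)⁻¹ * ρ σ (t⁻¹ * b) = b⁻¹ * ρ σ b := by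
  rw [map_mul, map_inv, ht σ]
  group

variable [CommGroup G] [MonoidHomClass F G G] {D : Set G}

theorem exists_root_isOfFinOrder_inv_mul (hD_fix : ∀ t ∈ D, ∀ σ, ρ σ t = t)
    (hD_div : ∀ x ∈ D, ∀ n ≠ 0, ∃ t ∈ D, t ^ n = x) {b : G} {n : ℕ} (hn : n ≠ 0)
    (hb : b ^ n ∈ D) :
    ∃ t ∈ D, t ^ n = b ^ n ∧ IsOfFinOrder (t⁻¹ * b) ∧
      ∀ σ, (t⁻¹ * b)⁻¹ * ρ σ (t⁻¹ * b) = b⁻¹ * ρ σ b := by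
  obtain ⟨t, ht, htn⟩ := hD_div _ hb n hn
  refine ⟨t, ht, htn, isOfFinOrder_iff_pow_eq_one.2 ⟨n, Nat.pos_of_ne_zero hn, ?_⟩,
    inv_mul_coboundary_eq ρ (hD_fix t ht) b⟩
  rw [mul_pow, inv_pow, htn, inv_mul_cancel]

theorem exists_isOfFinOrder_of_isOfFinOrder_coboundary (hD_fix : ∀ t ∈ D, ∀ σ, ρ σ t = t)
    (hD_div : ∀ x ∈ D, ∀ n ≠ 0, ∃ t ∈ D, t ^ n = x)
    (hD_tors : ∀ x, (∀ σ, ρ σ x = x) → ∃ M ≠ 0, x ^ M ∈ D) (hρ : (Set.range ρ).Finite) {b : G}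
    (hb : ∀ σ, IsOfFinOrder (b⁻¹ * ρ σ b)) :
    ∃ b' : G, IsOfFinOrder b' ∧ ∀ σ, b⁻¹ * ρ σ b = b'⁻¹ * ρ σ b' := by
  obtain ⟨N, hN, hbN⟩ := exists_pow_eq_one_of_finite_range
    (Set.range_comp (fun f : F => b⁻¹ * f b) ρ ▸ hρ.image _) hb
  have hfix : ∀ σ, ρ σ (b ^ N) = b ^ N := fun σ => by
    have h := hbN σ
    rw [mul_pow, inv_pow, ← map_pow] at h
    exact (inv_mul_eq_one.1 h).symm
  obtain ⟨M, hM, hbM⟩ := hD_tors _ hfix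
  rw [← pow_mul] at hbM
  obtain ⟨t, -, -, htor, hcob⟩ :=
    exists_root_isOfFinOrder_inv_mul ρ hD_fix hD_div (mul_ne_zero hN hM) hbM
  exact ⟨t⁻¹ * b, htor, fun σ => (hcob σ).symm⟩

end Coboundary

theorem Complex.eq_zero_of_exp_eq_one_of_norm_lt {z : ℂ} (h : exp z = 1)
    (hz : ‖z‖ < 2 * Real.pi) : z = 0 := by
  obtain ⟨n, rfl⟩ := exp_eq_one_iff.1 h
  have hnorm : ‖(n : ℂ) * (2 * Real.pi * I)‖ = |(n : ℝ)| * (2 * Real.pi) := by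
    simp [abs_of_pos Real.pi_pos]
  rw [hnorm] at hz
  have hn : n = 0 := by
    by_contra hn
    have : (1 : ℝ) ≤ |(n : ℝ)| := by exact_mod_cast Int.one_le_abs hn
    nlinarith [Real.pi_pos]
  simp [hn]

namespace ComplexTorus

variable {ι : Type*}

noncomputable def torusExp (v : ι → ℂ) : ι → ℂˣ := fun j => Units.mk0 (exp (v j)) (exp_ne_zero _)

@[simp]
theorem coe_torusExp_apply (v : ι → ℂ) (j : ι) : (torusExp v j : ℂ) = exp (v j) := rfl

theorem torusExp_add (v w : ι → ℂ) : torusExp (v + w) = torusExp v * torusExp w := by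
  ext j : 2
  simp [exp_add]

theorem torusExp_zero : torusExp (0 : ι → ℂ) = 1 := by
  ext j : 2
  simp

theorem torusExp_neg (v : ι → ℂ) : torusExp (-v) = (torusExp v)⁻¹ := by
  ext j : 2
  simp [exp_neg]

theorem torusExp_nsmul (n : ℕ) (v : ι → ℂ) : torusExp (n • v) = torusExp v ^ n := by
  ext j : 2
  simp [← exp_nat_mul]

theorem torusExp_log (x : ι → ℂˣ) : torusExp (fun j => log (x j)) = x := by
  ext j : 2
  simp [exp_log]

theorem continuous_torusExp : Continuous (torusExp (ι := ι)) := by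
  refine continuous_pi fun j => Units.continuous_iff.2 ⟨?_, ?_⟩
  · exact continuous_exp.comp (continuous_apply j)
  · exact (continuous_exp.comp (continuous_apply j).neg).congr fun v => by simp [exp_neg]

variable [Fintype ι]

def torusChar (μ : ι → ℤ) : (ι → ℂˣ) →* ℂˣ where
  toFun x := ∏ j, x j ^ μ j
  map_one' := by simp
  map_mul' x y := by simp [mul_zpow, Finset.prod_mul_distrib]

theorem torusChar_apply (μ : ι → ℤ) (x : ι → ℂˣ) : torusChar μ x = ∏ j, x j ^ μ j := rfl

theorem torusChar_sub_single [DecidableEq ι] (μ : ι → ℤ) (i : ι) (x : ι → ℂˣ) :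
    torusChar (μ - Pi.single i 1) x = torusChar μ x * (x i)⁻¹ := by
  simp [torusChar_apply, zpow_sub, Finset.prod_mul_distrib, Pi.single_apply]

def torusCharLin (μ : ι → ℤ) : (ι → ℂ) →ₗ[ℂ] ℂ := ∑ j, (μ j : ℂ) • LinearMap.proj j

theorem torusCharLin_apply (μ : ι → ℤ) (v : ι → ℂ) : torusCharLin μ v = ∑ j, μ j * v j := by
  simp [torusCharLin]

theorem torusChar_torusExp_eq_one_iff (μ : ι → ℤ) (v : ι → ℂ) :
    torusChar μ (torusExp v) = 1 ↔ exp (torusCharLin μ v) = 1 := by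
  rw [← Units.val_eq_one, torusChar_apply, torusCharLin_apply, exp_sum]
  simp [Units.val_zpow_eq_zpow_val, ← exp_int_mul]

def torusCharKer (E : Set (ι → ℤ)) : Subgroup (ι → ℂˣ) := ⨅ μ ∈ E, (torusChar μ).ker

theorem mem_torusCharKer {E : Set (ι → ℤ)} {x : ι → ℂˣ} :
    x ∈ torusCharKer E ↔ ∀ μ ∈ E, torusChar μ x = 1 := by
  simp [torusCharKer, Subgroup.mem_iInf]

def torusCharLinKer (E : Set (ι → ℤ)) : Submodule ℂ (ι → ℂ) :=
  ⨅ μ ∈ E, LinearMap.ker (torusCharLin μ)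

theorem mem_torusCharLinKer {E : Set (ι → ℤ)} {v : ι → ℂ} :
    v ∈ torusCharLinKer E ↔ ∀ μ ∈ E, torusCharLin μ v = 0 := by
  simp [torusCharLinKer, Submodule.mem_iInf]

noncomputable def torusExpSubgroup (E : Set (ι → ℤ)) : Subgroup (ι → ℂˣ) where
  carrier := torusExp '' torusCharLinKer E
  one_mem' := ⟨0, zero_mem _, torusExp_zero⟩
  mul_mem' := by
    rintro _ _ ⟨v, hv, rfl⟩ ⟨w, hw, rfl⟩
    exact ⟨v + w, add_mem hv hw, torusExp_add v w⟩
  inv_mem' := by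
    rintro _ ⟨v, hv, rfl⟩
    exact ⟨-v, neg_mem hv, torusExp_neg v⟩

variable {E : Set (ι → ℤ)}

theorem torusExpSubgroup_le_torusCharKer : torusExpSubgroup E ≤ torusCharKer E := by
  rintro _ ⟨v, hv, rfl⟩
  refine mem_torusCharKer.2 fun μ hμ => ?_
  rw [torusChar_torusExp_eq_one_iff, mem_torusCharLinKer.1 hv μ hμ, exp_zero]

theorem isPreconnected_torusExpSubgroup : IsPreconnected (torusExpSubgroup E : Set (ι → ℂˣ)) :=
  ((torusCharLinKer E).restrictScalars ℝ).isPathConnected.isConnected.isPreconnected.image _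
    continuous_torusExp.continuousOn

theorem torusExpSubgroup_mem_nhdsWithin (hE : E.Finite) :
    (torusExpSubgroup E : Set (ι → ℂˣ)) ∈ 𝓝[torusCharKer E] 1 := by
  have hlog : ContinuousAt (fun x : ι → ℂˣ => fun j => log (x j)) 1 :=
    continuousAt_pi.2 fun j => (continuousAt_clog (by simp)).comp
      (Units.continuous_val.comp (continuous_apply j)).continuousAt
  have hsmall : ∀ᶠ x in 𝓝 (1 : ι → ℂˣ),
      ∀ μ ∈ E, ‖torusCharLin μ fun j => log (x j)‖ < 2 * Real.pi := by
    refine (eventually_all_finite hE).2 fun μ _ => ?_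
    exact ((torusCharLin μ).continuous_of_finiteDimensional.continuousAt.comp hlog).norm
      |>.eventually_lt continuousAt_const (by simp [torusCharLin_apply, Real.pi_pos])
  rw [mem_nhdsWithin_iff_eventually]
  filter_upwards [hsmall] with x hx hxS
  refine ⟨_, mem_torusCharLinKer.2 fun μ hμ => ?_, torusExp_log x⟩
  refine eq_zero_of_exp_eq_one_of_norm_lt ?_ (hx μ hμ)
  rw [← torusChar_torusExp_eq_one_iff, torusExp_log]
  exact mem_torusCharKer.1 hxS μ hμ

theorem connectedComponentIn_torusCharKer (hE : E.Finite) :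
    connectedComponentIn (torusCharKer E : Set (ι → ℂˣ)) 1 = torusExpSubgroup E :=
  (Subgroup.connectedComponentIn_one_subset (torusExpSubgroup_mem_nhdsWithin hE)).antisymm
    (isPreconnected_torusExpSubgroup.subset_connectedComponentIn (one_mem _)
      torusExpSubgroup_le_torusCharKer)

theorem exists_pow_eq_of_mem_torusExpSubgroup {x : ι → ℂˣ} (hx : x ∈ torusExpSubgroup E) {n : ℕ}
    (hn : n ≠ 0) : ∃ t ∈ torusExpSubgroup E, t ^ n = x := by
  obtain ⟨v, hv, rfl⟩ := hx
  refine ⟨torusExp ((n : ℂ)⁻¹ • v), ⟨_, Submodule.smul_mem _ _ hv, rfl⟩, ?_⟩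
  rw [← torusExp_nsmul, ← Nat.cast_smul_eq_nsmul ℂ, smul_inv_smul₀ (by exact_mod_cast hn)]

theorem isOfFinOrder_torusExp_rat (q : ι → ℚ) :
    IsOfFinOrder (torusExp fun j => 2 * Real.pi * I * q j) := by
  refine IsOfFinOrder.pi fun j => isOfFinOrder_iff_pow_eq_one.2 ⟨(q j).den, (q j).pos, ?_⟩
  ext
  rw [Units.val_pow_eq_pow_val, coe_torusExp_apply, ← exp_nat_mul, Units.val_one]
  have hq : ((q j).den : ℂ) * q j = (q j).num := by exact_mod_cast Rat.den_mul_eq_num (q j)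
  rw [show ((q j).den : ℂ) * (2 * Real.pi * I * q j) = (q j).den * q j * (2 * Real.pi * I) by ring,
    hq, exp_int_mul_two_pi_mul_I]

/-- `w = log x` satisfies the integral equations `⟨μ, w⟩ ∈ 2πiℤ`; a `ℚ`-linear retraction
`ℂ → ℚ` applied to `w / 2πi` gives a rational solution `q`, and then `⟨μ, w - 2πi q⟩ = 0`. -/
theorem exists_mul_torusExp_rat_of_mem_torusCharKer {x : ι → ℂˣ} (hx : x ∈ torusCharKer E) :
    ∃ a ∈ torusExpSubgroup E, ∃ q : ι → ℚ, x = a * torusExp fun j => 2 * Real.pi * I * q j := by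
  obtain ⟨proj, hproj⟩ := (Algebra.linearMap ℚ ℂ).exists_leftInverse_of_injective
    (LinearMap.ker_eq_bot.2 (algebraMap ℚ ℂ).injective)
  have hproj_int (k : ℤ) : proj k = k := by
    simpa using LinearMap.congr_fun hproj (k : ℚ)
  set c : ℂ := 2 * Real.pi * I
  have hc : c ≠ 0 := by simp [c, Real.pi_ne_zero, I_ne_zero]
  set w : ι → ℂ := fun j => log (x j)
  set q : ι → ℚ := fun j => proj (w j / c)
  refine ⟨torusExp (w - fun j => c * q j), ⟨_, mem_torusCharLinKer.2 fun μ hμ => ?_, rfl⟩, q, ?_⟩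
  · obtain ⟨k, hk⟩ := exp_eq_one_iff.1 <| (torusChar_torusExp_eq_one_iff μ w).1 <| by
      rw [torusExp_log]; exact mem_torusCharKer.1 hx μ hμ
    have hw : ∑ j, μ j • (w j / c) = (k : ℂ) := by
      rw [torusCharLin_apply] at hk
      simp only [zsmul_eq_mul, ← mul_div_assoc, ← Finset.sum_div, hk]
      exact mul_div_cancel_right₀ _ hc
    have hq : ∑ j, (μ j : ℂ) * q j = k := by
      have h : ∑ j, (μ j : ℚ) * q j = k := by
        have h := congrArg proj hw
        rw [map_sum, hproj_int] at h
        simp only [map_zsmul] at h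
        simpa only [zsmul_eq_mul] using h
      exact_mod_cast h
    rw [map_sub, hk, torusCharLin_apply]
    simp_rw [mul_left_comm _ c, ← Finset.mul_sum, hq]
    ring
  · rw [← torusExp_add, sub_add_cancel, torusExp_log]

theorem exists_pow_mem_torusExpSubgroup {x : ι → ℂˣ} (hx : x ∈ torusCharKer E) :
    ∃ M ≠ 0, x ^ M ∈ torusExpSubgroup E := by
  obtain ⟨a, ha, q, rfl⟩ := exists_mul_torusExp_rat_of_mem_torusCharKer hx
  refine ⟨_, (isOfFinOrder_torusExp_rat q).orderOf_pos.ne', ?_⟩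
  rw [mul_pow, pow_orderOf_eq_one, mul_one]
  exact pow_mem ha _

theorem exists_finite_setOf_fixed_eq_torusCharKer [DecidableEq ι] {Γ F : Type*}
    [FunLike F (ι → ℂˣ) (ι → ℂˣ)] (ρ : Γ → F)
    (halg : ∀ σ, ∃ A : Matrix ι ι ℤ, ∀ x i, ρ σ x i = ∏ j, x j ^ A i j)
    (hfin : (Set.range ρ).Finite) :
    ∃ E : Set (ι → ℤ), E.Finite ∧ {x | ∀ σ, ρ σ x = x} = torusCharKer E := by
  have hA : ∀ f ∈ Set.range ρ, ∃ A : Matrix ι ι ℤ, ∀ x i, f x i = ∏ j, x j ^ A i j := by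
    rintro _ ⟨σ, rfl⟩
    exact halg σ
  choose! A hA using hA
  have := hfin.to_subtype
  refine ⟨Set.range fun p : Set.range ρ × ι => A p.1 p.2 - Pi.single p.2 1, Set.finite_range _, ?_⟩
  ext x
  simp only [Set.mem_ofPred_eq, SetLike.mem_coe, mem_torusCharKer, Set.forall_mem_range,
    Prod.forall, Subtype.forall, torusChar_sub_single, mul_inv_eq_one]
  refine ⟨fun h σ i => ?_, fun h σ => funext fun i => ?_⟩
  · rw [torusChar_apply, ← hA _ ⟨σ, rfl⟩, h σ]
  · rw [hA _ ⟨σ, rfl⟩, ← torusChar_apply]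
    exact h σ i

end ComplexTorus

open ComplexTorus

theorem stmt15_general {Γ : Type*} [Group Γ] (r : ℕ)
    (ρ : Γ →* ((Fin r → ℂˣ) ≃* (Fin r → ℂˣ)))
    (halg : ∀ σ : Γ, ∃ A : Matrix (Fin r) (Fin r) ℤ,
      ∀ (x : Fin r → ℂˣ) (i : Fin r), ρ σ x i = ∏ j, x j ^ A i j)
    (hfin : (Set.range ρ).Finite)
    (b : Fin r → ℂˣ) (n : ℕ) (hn : 0 < n)
    (hb0 : b ^ n ∈ connectedComponentIn {x : Fin r → ℂˣ | ∀ σ, ρ σ x = x} 1) :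
    (∃ t ∈ connectedComponentIn {x : Fin r → ℂˣ | ∀ σ, ρ σ x = x} 1,
      t ^ n = b ^ n ∧ IsOfFinOrder (t⁻¹ * b) ∧
      ∀ σ, (t⁻¹ * b)⁻¹ * ρ σ (t⁻¹ * b) = b⁻¹ * ρ σ b) ∧
    (∀ d : Γ → Fin r → ℂˣ, (∃ b₀ : Fin r → ℂˣ, ∀ σ, d σ = b₀⁻¹ * ρ σ b₀) →
      (∀ σ, IsOfFinOrder (d σ)) →
      ∃ b' : Fin r → ℂˣ, IsOfFinOrder b' ∧ ∀ σ, d σ = b'⁻¹ * ρ σ b') := by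
  obtain ⟨E, hE, hfix⟩ := exists_finite_setOf_fixed_eq_torusCharKer ρ halg hfin
  have hfix' (x : Fin r → ℂˣ) : (∀ σ, ρ σ x = x) ↔ x ∈ torusCharKer E := Set.ext_iff.1 hfix x
  rw [hfix, connectedComponentIn_torusCharKer hE] at hb0 ⊢
  have hD_fix : ∀ t ∈ torusExpSubgroup E, ∀ σ, ρ σ t = t := fun t ht =>
    (hfix' t).2 (torusExpSubgroup_le_torusCharKer ht)
  have hD_div : ∀ x ∈ torusExpSubgroup E, ∀ m ≠ 0, ∃ t ∈ torusExpSubgroup E, t ^ m = x :=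
    fun _ hx _ hm => exists_pow_eq_of_mem_torusExpSubgroup hx hm
  have hD_tors : ∀ x, (∀ σ, ρ σ x = x) → ∃ M ≠ 0, x ^ M ∈ torusExpSubgroup E :=
    fun x hx => exists_pow_mem_torusExpSubgroup ((hfix' x).1 hx)
  refine ⟨exists_root_isOfFinOrder_inv_mul ρ hD_fix hD_div hn.ne' hb0, ?_⟩
  rintro d ⟨b₀, hd⟩ htor
  obtain ⟨b', hb', hcob⟩ := exists_isOfFinOrder_of_isOfFinOrder_coboundary ρ hD_fix hD_div
    hD_tors hfin (b := b₀) fun σ => hd σ ▸ htor σ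
  exact ⟨b', hb', fun σ => (hd σ).trans (hcob σ)⟩

/-- Let `Γ` act on the complex torus `T̂ = (ℂˣ)ʳ` through a finite quotient by algebraic
automorphisms (monomial maps given by integer matrices).  Suppose `c ∈ C¹(Γ, T̂)` is a
1-cochain whose square is a coboundary and whose differential `∂c` has finite order.
If `b ∈ T̂` satisfies `b⁻ⁿ σ(bⁿ) = 1` for all `σ` (i.e. `bⁿ` is `Γ`-fixed) for some `n ≥ 1`,
and `bⁿ` lies in the identity component `T̂^{Γ,0}` of the fixed-point group, then there is
`t ∈ T̂^{Γ,0}` with `tⁿ = bⁿ`, and `b' = t⁻¹ b` is a torsion element with the same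
coboundary `σ ↦ b'⁻¹ σ(b') = b⁻¹ σ(b)`.  Consequently, every coboundary in
`B¹(Γ, T̂) ∩ C¹(Γ, T̂[∞])` is the coboundary of a torsion element. -/
theorem stmt15 {Γ : Type*} [Group Γ] (r : ℕ)
    (ρ : Γ →* ((Fin r → ℂˣ) ≃* (Fin r → ℂˣ)))
    (halg : ∀ σ : Γ, ∃ A : Matrix (Fin r) (Fin r) ℤ,
      ∀ (x : Fin r → ℂˣ) (i : Fin r), ρ σ x i = ∏ j, x j ^ A i j)
    (hfin : (Set.range ρ).Finite)
    (c : Γ → Fin r → ℂˣ)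
    (hc2 : ∃ a : Fin r → ℂˣ, ∀ σ, c σ ^ 2 = a⁻¹ * ρ σ a)
    (hdc : ∃ N : ℕ, 0 < N ∧ ∀ σ τ, (ρ σ (c τ) * (c (σ * τ))⁻¹ * c σ) ^ N = 1)
    (b : Fin r → ℂˣ) (n : ℕ) (hn : 0 < n)
    (hbfix : ∀ σ, ρ σ (b ^ n) = b ^ n)
    (hb0 : b ^ n ∈ connectedComponentIn {x : Fin r → ℂˣ | ∀ σ, ρ σ x = x} 1) :
    (∃ t ∈ connectedComponentIn {x : Fin r → ℂˣ | ∀ σ, ρ σ x = x} 1,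
      t ^ n = b ^ n ∧ IsOfFinOrder (t⁻¹ * b) ∧
      ∀ σ, (t⁻¹ * b)⁻¹ * ρ σ (t⁻¹ * b) = b⁻¹ * ρ σ b) ∧
    (∀ d : Γ → Fin r → ℂˣ, (∃ b₀ : Fin r → ℂˣ, ∀ σ, d σ = b₀⁻¹ * ρ σ b₀) →
      (∀ σ, IsOfFinOrder (d σ)) →
      ∃ b' : Fin r → ℂˣ, IsOfFinOrder b' ∧ ∀ σ, d σ = b'⁻¹ * ρ σ b') :=
  stmt15_general r ρ halg hfin b n hn hb0
end
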